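/- Let U be a symmetric positive-definite real 3×3 matrix with eigenvalues λ₁ < λ₂ = 1 < λ₃ and corresponding orthonormal eigenvectors û₁, û₂, û₃. For κ ∈ {+1, −1} fix ρ_κ ≠ 0 and define b_κ := (ρ_κ/√(λ₃² − λ₁²)) ( λ₃√(1−λ₁²) û₁ + κ λ₁√(λ₃²−1) û₃ ) and m̂_κ := ((λ₃ − λ₁)/(ρ_κ √(λ₃² − λ₁²))) ( −√(1−λ₁²) û₁ + κ √(λ₃²−1) û₃ ). Suppose R₊, R₋ ∈ SO(3) satisfy R₊ U − I = b₊ ⊗ m̂₊ and R₋ U − I = b₋ ⊗ m̂₋. Then R₊ û₂ = û₂ = R₋ û₂, R₊ R₋ = R₋ R₊ = I, and the rotation angle θ of R₊ (about the axis û₂) satisfies cos θ = (1 + λ₁λ₃)/(λ₁ + λ₃), equivalently tr R₊ = 1 + 2(1 + λ₁λ₃)/(λ₁ + λ₃). -/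

import Mathlib

open Matrix

noncomputable section

abbrev V3 : Type := Fin 3 → ℝ
abbrev M3 : Type := Matrix (Fin 3) (Fin 3) ℝ

/-- `Q` is a rotation matrix: `Q ∈ SO(3)`. -/
def SO3 (Q : M3) : Prop := Q.transpose * Q = 1 ∧ Q.det = 1

/-- Rank-one matrix `a ⊗ n` with entries `aᵢ nⱼ`. -/
def outer (a n : V3) : M3 := Matrix.vecMulVec a n

lemma outer_mulVec (a n v : V3) : (outer a n).mulVec v = (n ⬝ᵥ v) • a := by
  ext i
  simp [outer, Matrix.vecMulVec, Matrix.mulVec, dotProduct, Finset.mul_sum,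
    mul_comm, mul_left_comm]

set_option maxHeartbeats 1600000 in
/-- **Proposition on the two austenite–martensite rotations.** If
`R₊U − I = b₊⊗m̂₊` and `R₋U − I = b₋⊗m̂₋` are the two solutions (κ = ±1) of the
austenite–martensite equation for a stretch tensor `U` with eigenvalues
`λ₁ < 1 < λ₃`, then `R₊û₂ = û₂ = R₋û₂`, `R₊R₋ = R₋R₊ = I`, and the rotation
angle `θ` of `R₊` about `û₂` satisfies `cos θ = (1+λ₁λ₃)/(λ₁+λ₃)`,
equivalently `tr R₊ = 1 + 2(1+λ₁λ₃)/(λ₁+λ₃)`. -/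
theorem two_rotations_inverse
    (U : M3) (hU : U.PosDef)
    (l1 l3 : ℝ) (hl1 : l1 < 1) (hl3 : 1 < l3)
    (u1 u2 u3 : V3)
    (hUu1 : U.mulVec u1 = l1 • u1) (hUu2 : U.mulVec u2 = u2)
    (hUu3 : U.mulVec u3 = l3 • u3)
    (hn1 : u1 ⬝ᵥ u1 = 1) (hn2 : u2 ⬝ᵥ u2 = 1) (hn3 : u3 ⬝ᵥ u3 = 1)
    (ho12 : u1 ⬝ᵥ u2 = 0) (ho13 : u1 ⬝ᵥ u3 = 0) (ho23 : u2 ⬝ᵥ u3 = 0)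
    (ρp ρm : ℝ) (hρp : ρp ≠ 0) (hρm : ρm ≠ 0)
    (bP bM mP mM : V3)
    (hbP : bP = (ρp / Real.sqrt (l3 ^ 2 - l1 ^ 2)) •
      ((l3 * Real.sqrt (1 - l1 ^ 2)) • u1 + (l1 * Real.sqrt (l3 ^ 2 - 1)) • u3))
    (hbM : bM = (ρm / Real.sqrt (l3 ^ 2 - l1 ^ 2)) •
      ((l3 * Real.sqrt (1 - l1 ^ 2)) • u1 - (l1 * Real.sqrt (l3 ^ 2 - 1)) • u3))
    (hmP : mP = ((l3 - l1) / (ρp * Real.sqrt (l3 ^ 2 - l1 ^ 2))) •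
      ((-(Real.sqrt (1 - l1 ^ 2))) • u1 + Real.sqrt (l3 ^ 2 - 1) • u3))
    (hmM : mM = ((l3 - l1) / (ρm * Real.sqrt (l3 ^ 2 - l1 ^ 2))) •
      ((-(Real.sqrt (1 - l1 ^ 2))) • u1 - Real.sqrt (l3 ^ 2 - 1) • u3))
    (Rp Rm : M3) (hRp : SO3 Rp) (hRm : SO3 Rm)
    (heqP : Rp * U - 1 = outer bP mP)
    (heqM : Rm * U - 1 = outer bM mM) :
    Rp.mulVec u2 = u2 ∧ Rm.mulVec u2 = u2 ∧
    Rp * Rm = 1 ∧ Rm * Rp = 1 ∧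
    Rp.trace = 1 + 2 * (1 + l1 * l3) / (l1 + l3) := by
  -- basic positivity facts
  have hu1ne : u1 ≠ 0 := by intro h; rw [h] at hn1; simp at hn1
  have hl1pos : 0 < l1 := by
    have h := hU.dotProduct_mulVec_pos hu1ne
    rw [hUu1] at h
    simpa [dotProduct_smul, hn1] using h
  have hl3pos : 0 < l3 := lt_trans one_pos hl3
  have hl1ne : l1 ≠ 0 := ne_of_gt hl1pos
  have hl3ne : l3 ≠ 0 := ne_of_gt hl3pos
  have hsum : l1 + l3 ≠ 0 := by positivity
  set α := Real.sqrt (1 - l1 ^ 2) with hαdef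
  set β := Real.sqrt (l3 ^ 2 - 1) with hβdef
  set σ := Real.sqrt (l3 ^ 2 - l1 ^ 2) with hσdef
  have h1l1 : (0:ℝ) < 1 - l1 ^ 2 := by nlinarith
  have hl31 : (0:ℝ) < l3 ^ 2 - 1 := by nlinarith
  have hl3l1 : (0:ℝ) < l3 ^ 2 - l1 ^ 2 := by nlinarith
  have hα2 : α ^ 2 = 1 - l1 ^ 2 := Real.sq_sqrt h1l1.le
  have hβ2 : β ^ 2 = l3 ^ 2 - 1 := Real.sq_sqrt hl31.le
  have hσ2 : σ ^ 2 = l3 ^ 2 - l1 ^ 2 := Real.sq_sqrt hl3l1.le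
  have hσne : σ ≠ 0 := by
    intro h; rw [h] at hσ2; simp at hσ2; nlinarith
  -- abbreviations
  set γ : ℝ := (1 + l1 * l3) / (l1 + l3) with hγdef
  set δ : ℝ := α * β / (l1 + l3) with hδdef
  have hγδ : γ ^ 2 + δ ^ 2 = 1 := by
    rw [hγdef, hδdef]
    field_simp
    nlinarith [hα2, hβ2]
  -- key identities
  have keyP : ∀ v : V3, Rp.mulVec (U.mulVec v) = v + (mP ⬝ᵥ v) • bP := by
    intro v
    have h : Rp * U = 1 + outer bP mP := by
      rw [← heqP]; abel
    calc Rp.mulVec (U.mulVec v) = (Rp * U).mulVec v := by rw [Matrix.mulVec_mulVec]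
      _ = v + (mP ⬝ᵥ v) • bP := by rw [h, Matrix.add_mulVec, Matrix.one_mulVec, outer_mulVec]
  have keyM : ∀ v : V3, Rm.mulVec (U.mulVec v) = v + (mM ⬝ᵥ v) • bM := by
    intro v
    have h : Rm * U = 1 + outer bM mM := by
      rw [← heqM]; abel
    calc Rm.mulVec (U.mulVec v) = (Rm * U).mulVec v := by rw [Matrix.mulVec_mulVec]
      _ = v + (mM ⬝ᵥ v) • bM := by rw [h, Matrix.add_mulVec, Matrix.one_mulVec, outer_mulVec]
  -- dot products
  have dmPu1 : mP ⬝ᵥ u1 = (l3 - l1) / (ρp * σ) * (-α) := by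
    rw [hmP]
    simp [smul_dotProduct, add_dotProduct, neg_dotProduct, hn1,
      dotProduct_comm u3 u1, ho13]
  have dmPu3 : mP ⬝ᵥ u3 = (l3 - l1) / (ρp * σ) * β := by
    rw [hmP]
    simp [smul_dotProduct, add_dotProduct, neg_dotProduct, hn3, ho13]
  have dmPu2 : mP ⬝ᵥ u2 = 0 := by
    rw [hmP]
    simp [smul_dotProduct, add_dotProduct, neg_dotProduct, ho12,
      dotProduct_comm u3 u2, ho23]
  have dmMu1 : mM ⬝ᵥ u1 = (l3 - l1) / (ρm * σ) * (-α) := by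
    rw [hmM]
    simp [smul_dotProduct, sub_dotProduct, neg_dotProduct, hn1,
      dotProduct_comm u3 u1, ho13]
  have dmMu3 : mM ⬝ᵥ u3 = (l3 - l1) / (ρm * σ) * (-β) := by
    rw [hmM]
    simp [smul_dotProduct, sub_dotProduct, neg_dotProduct, hn3, ho13]
  have dmMu2 : mM ⬝ᵥ u2 = 0 := by
    rw [hmM]
    simp [smul_dotProduct, sub_dotProduct, neg_dotProduct, ho12,
      dotProduct_comm u3 u2, ho23]
  -- action on u2
  have hRpu2 : Rp.mulVec u2 = u2 := by
    have h := keyP u2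
    rw [hUu2, dmPu2] at h
    simpa using h
  have hRmu2 : Rm.mulVec u2 = u2 := by
    have h := keyM u2
    rw [hUu2, dmMu2] at h
    simpa using h
  -- action on u1, u3
  have hRpu1 : Rp.mulVec u1 = γ • u1 + (-δ) • u3 := by
    have h := keyP u1
    rw [hUu1, Matrix.mulVec_smul, dmPu1, hbP] at h
    refine smul_right_injective V3 hl1ne ?_
    show l1 • _ = l1 • _
    rw [h]
    match_scalars <;> simp only [hγdef, hδdef] <;>
      (field_simp; ring_nf; simp only [hα2, hβ2, hσ2]; ring)
  have hRpu3 : Rp.mulVec u3 = δ • u1 + γ • u3 := by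
    have h := keyP u3
    rw [hUu3, Matrix.mulVec_smul, dmPu3, hbP] at h
    refine smul_right_injective V3 hl3ne ?_
    show l3 • _ = l3 • _
    rw [h]
    match_scalars <;> simp only [hγdef, hδdef] <;>
      (field_simp; ring_nf; simp only [hα2, hβ2, hσ2]; ring)
  have hRmu1 : Rm.mulVec u1 = γ • u1 + δ • u3 := by
    have h := keyM u1
    rw [hUu1, Matrix.mulVec_smul, dmMu1, hbM] at h
    refine smul_right_injective V3 hl1ne ?_
    show l1 • _ = l1 • _
    rw [h]
    match_scalars <;> simp only [hγdef, hδdef] <;>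
      (field_simp; ring_nf; simp only [hα2, hβ2, hσ2]; ring)
  have hRmu3 : Rm.mulVec u3 = (-δ) • u1 + γ • u3 := by
    have h := keyM u3
    rw [hUu3, Matrix.mulVec_smul, dmMu3, hbM] at h
    refine smul_right_injective V3 hl3ne ?_
    show l3 • _ = l3 • _
    rw [h]
    match_scalars <;> simp only [hγdef, hδdef] <;>
      (field_simp; ring_nf; simp only [hα2, hβ2, hσ2]; ring)
  -- the orthogonal matrix with columns u1 u2 u3
  set P : M3 := Matrix.of (fun i j => ![u1, u2, u3] j i) with hPdef
  have hPcol : ∀ (M : M3) (i : Fin 3) (j : Fin 3),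
      (M * P) i j = M.mulVec (![u1, u2, u3] j) i := by
    intro M i j
    simp [hPdef, Matrix.mul_apply, Matrix.mulVec, dotProduct]
  have hPtP : P.transpose * P = 1 := by
    ext i j
    have e1 := hn1; have e2 := hn2; have e3 := hn3
    have f1 := ho12; have f2 := ho13; have f3 := ho23
    simp only [dotProduct, Fin.sum_univ_three] at e1 e2 e3 f1 f2 f3
    fin_cases i <;> fin_cases j <;>
      simp [hPdef, Matrix.mul_apply, Fin.sum_univ_three, Matrix.one_apply] <;>
      linarith [e1, e2, e3, f1, f2, f3]
  have hPPt : P * P.transpose = 1 := mul_eq_one_comm.mp hPtP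
  -- Rp * Rm = 1
  have hc1 : (Rp * Rm).mulVec u1 = u1 := by
    rw [← Matrix.mulVec_mulVec, hRmu1, Matrix.mulVec_add, Matrix.mulVec_smul,
      Matrix.mulVec_smul, hRpu1, hRpu3]
    match_scalars <;> nlinarith [hγδ]
  have hc2 : (Rp * Rm).mulVec u2 = u2 := by
    rw [← Matrix.mulVec_mulVec, hRmu2, hRpu2]
  have hc3 : (Rp * Rm).mulVec u3 = u3 := by
    rw [← Matrix.mulVec_mulVec, hRmu3, Matrix.mulVec_add, Matrix.mulVec_smul,
      Matrix.mulVec_smul, hRpu1, hRpu3]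
    match_scalars <;> nlinarith [hγδ]
  have hprod : Rp * Rm = 1 := by
    have hcol : (Rp * Rm) * P = P := by
      ext i j
      rw [hPcol]
      fin_cases j <;> simp [hc1, hc2, hc3, hPdef]
    have h0 : Rp * Rm = (Rp * Rm) * P * P.transpose := by
      rw [mul_assoc, hPPt, mul_one]
    rw [h0, hcol, hPPt]
  have hprod' : Rm * Rp = 1 := mul_eq_one_comm.mp hprod
  -- trace
  set A : M3 := Matrix.of !![γ, 0, δ; 0, 1, 0; -δ, 0, γ] with hAdef
  have hAe : ∀ i j, A i j = !![γ, 0, δ; 0, 1, 0; -δ, 0, γ] i j := fun _ _ => rfl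
  have hcA : Rp * P = P * A := by
    ext i j
    rw [hPcol]
    fin_cases j <;>
      simp [hRpu1, hRpu2, hRpu3, hPdef, hAe, Matrix.mul_apply,
        Fin.sum_univ_three] <;> (try ring)
  have htr : Rp.trace = 1 + 2 * (1 + l1 * l3) / (l1 + l3) := by
    have hRpeq : Rp = P * A * P.transpose := by
      have h0 : Rp = Rp * P * P.transpose := by rw [mul_assoc, hPPt, mul_one]
      rw [h0, hcA]
    rw [hRpeq, Matrix.trace_mul_cycle, hPtP, one_mul]
    rw [Matrix.trace_fin_three]
    simp [hAe, hγdef]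
    ring
  exact ⟨hRpu2, hRmu2, hprod, hprod', htr⟩
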